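/- In the shuffle algebra for d = 0 (quiver with one vertex and no loops), the product ψ_{2i_1+1}·ψ_{2i_2+1}·...·ψ_{2i_n+1} of the one-variable generators ψ_{2i+1} = x^i (with 0 ≤ i_1 < i_2 < ... < i_n) equals the Schur polynomial s_λ(x_1,...,x_n) where λ = (i_n + 1 - n, i_{n-1} + 2 - n, ..., i_1). -/

import Mathlib

/- The Schur polynomial is used in bialternant form,
   s_λ(x_1,…,x_n) = det(x_a^{i_b}) / ∏_{a<b}(x_b - x_a), cleared of its denominator. -/

namespace Stmt2

noncomputable section

lemma compl_card {n m : ℕ} (S : Finset (Fin (n + m))) (hS : S.card = n) :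
    Sᶜ.card = m := by
  rw [Finset.card_compl, hS, Fintype.card_fin]
  omega

def shuffleMul (d : ℕ) {n m : ℕ} (f1 : (Fin n → ℚ) → ℚ) (f2 : (Fin m → ℚ) → ℚ) :
    (Fin (n + m) → ℚ) → ℚ := fun x =>
  ∑ S ∈ (Finset.powersetCard n (Finset.univ : Finset (Fin (n + m)))).attach,
    f1 (fun a => x (S.1.orderEmbOfFin ((Finset.mem_powersetCard.mp S.2).2) a)) *
      f2 (fun b => x ((S.1)ᶜ.orderEmbOfFin
        (compl_card S.1 ((Finset.mem_powersetCard.mp S.2).2)) b)) *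
      ∏ a : Fin n, ∏ b : Fin m,
        (x ((S.1)ᶜ.orderEmbOfFin (compl_card S.1 ((Finset.mem_powersetCard.mp S.2).2)) b) -
            x (S.1.orderEmbOfFin ((Finset.mem_powersetCard.mp S.2).2) a)) ^ ((d : ℤ) - 1)

/-- The generator `ψ_{2i+1}`: the one-variable polynomial `x^i`. -/
def psi (i : ℕ) : (Fin 1 → ℚ) → ℚ := fun x => x 0 ^ i

/-- Iterated shuffle product (for `d = 0`) of the generators with exponents given by a list. -/
def psiProd : (l : List ℕ) → (Fin l.length → ℚ) → ℚ
  | [] => fun _ => 1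
  | i :: tl => fun x =>
      shuffleMul 0 (psi i) (psiProd tl)
        (fun j => x (finCongr (Nat.add_comm 1 tl.length) j))

/-! Left multiplication by a generator `ψ = x^i` is, once the Vandermonde denominator is
cleared, the Laplace expansion of the bialternant `det (x_a ^ e_b)` along its first column: the
shuffle term in which `x_k` is fed to `ψ` carries `∏_{b ≠ k} (x_b - x_k)⁻¹`, and the Vandermonde
product splits as `(-1)^k ∏_{b ≠ k} (x_b - x_k)` times the Vandermonde product of the other
variables. Induction on the number of factors finishes the proof. -/

open Finset Matrix

lemma prod_filter_lt_sub_eq_det_vandermonde {R : Type*} [CommRing R] {n : ℕ} (x : Fin n → R) :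
    ∏ p ∈ univ.filter (fun p : Fin n × Fin n => p.1 < p.2), (x p.2 - x p.1) =
      (vandermonde x).det := by
  rw [det_vandermonde]
  exact prod_finset_product _ _ _ (by simp) (f := fun p => x p.2 - x p.1)

lemma det_vandermonde_succ {R : Type*} [CommRing R] {m : ℕ} (y : Fin (m + 1) → R) :
    (vandermonde y).det =
      (∏ b : Fin m, (y b.succ - y 0)) * (vandermonde (y ∘ Fin.succ)).det := by
  simp only [det_vandermonde, Fin.prod_univ_succ, Fin.prod_Ioi_zero, Fin.prod_Ioi_succ,
    Function.comp_apply]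

lemma det_vandermonde_succAbove {R : Type*} [CommRing R] {m : ℕ} (x : Fin (m + 1) → R)
    (k : Fin (m + 1)) :
    (vandermonde x).det =
      (-1) ^ (k : ℕ) * (∏ b : Fin m, (x (k.succAbove b) - x k)) *
        (vandermonde (x ∘ k.succAbove)).det := by
  have hrot :
      (vandermonde (x ∘ k.cycleRange.symm)).det = (-1) ^ (k : ℕ) * (vandermonde x).det := by
    rw [show vandermonde (x ∘ k.cycleRange.symm) =
      (vandermonde x).submatrix k.cycleRange.symm id from rfl, det_permute,
      Equiv.Perm.sign_symm, Fin.sign_cycleRange]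
    push_cast; rfl
  rw [det_vandermonde_succ] at hrot
  simp only [Function.comp_def, Fin.cycleRange_symm_zero, Fin.cycleRange_symm_succ] at hrot
  calc (vandermonde x).det = (-1) ^ (k : ℕ) * ((-1) ^ (k : ℕ) * (vandermonde x).det) := by
        rw [← mul_assoc, ← mul_pow]; simp
    _ = _ := by rw [← hrot, mul_assoc]; rfl

lemma sum_attach_powersetCard_one {α M : Type*} [Fintype α] [DecidableEq α] [AddCommMonoid M]
    (F : {S // S ∈ powersetCard 1 (univ : Finset α)} → M) :
    ∑ S ∈ (powersetCard 1 univ).attach, F S = ∑ a, F ⟨{a}, by simp⟩ := by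
  refine (sum_bij (fun a _ => ⟨{a}, by simp⟩) (by simp)
    (fun a _ b _ h => singleton_injective (congrArg Subtype.val h)) ?_ (fun _ _ => rfl)).symm
  rintro ⟨S, hS⟩ _
  obtain ⟨a, rfl⟩ := card_eq_one.mp (mem_powersetCard.mp hS).2
  exact ⟨a, mem_univ a, rfl⟩

lemma orderEmbOfFin_compl_singleton_cast {m N : ℕ} (h : m + 1 = N) (k : Fin (m + 1))
    (hcard : ({Fin.cast h k}ᶜ : Finset (Fin N)).card = m) (b : Fin m) :
    ({Fin.cast h k}ᶜ : Finset (Fin N)).orderEmbOfFin hcard b = Fin.cast h (k.succAbove b) := by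
  subst h
  simp

lemma shuffleMul_psi {m : ℕ} (i : ℕ) (f : (Fin m → ℚ) → ℚ) (x : Fin (m + 1) → ℚ) :
    shuffleMul 0 (psi i) f (fun j => x (finCongr (Nat.add_comm 1 m) j)) =
      ∑ k : Fin (m + 1),
        x k ^ i * f (x ∘ k.succAbove) * (∏ b : Fin m, (x (k.succAbove b) - x k))⁻¹ := by
  rw [shuffleMul, sum_attach_powersetCard_one, ← (finCongr (Nat.add_comm m 1)).sum_comp]
  refine Finset.sum_congr rfl fun k _ => ?_
  simp [psi, orderEmbOfFin_compl_singleton_cast, Function.comp_def, prod_inv_distrib]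

lemma shuffleMul_psi_mul_det_vandermonde {m : ℕ} (e : Fin (m + 1) → ℕ) (f : (Fin m → ℚ) → ℚ)
    (hf : ∀ y : Fin m → ℚ, Function.Injective y →
      f y * (vandermonde y).det = (of fun a b => y a ^ e b.succ).det)
    (x : Fin (m + 1) → ℚ) (hx : Function.Injective x) :
    shuffleMul 0 (psi (e 0)) f (fun j => x (finCongr (Nat.add_comm 1 m) j)) * (vandermonde x).det =
      (of fun a b => x a ^ e b).det := by
  rw [shuffleMul_psi, Finset.sum_mul, det_succ_column_zero (of fun a b => x a ^ e b)]
  refine Finset.sum_congr rfl fun k _ => ?_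
  have hminor : (of fun a b => x a ^ e b).submatrix k.succAbove Fin.succ =
      of fun a b => (x ∘ k.succAbove) a ^ e b.succ := rfl
  have hne : ∏ b, (x (k.succAbove b) - x k) ≠ 0 :=
    prod_ne_zero_iff.mpr fun b _ => sub_ne_zero.mpr (hx.ne (Fin.succAbove_ne k b))
  rw [det_vandermonde_succAbove x k, hminor, ← hf _ (hx.comp Fin.succAbove_right_injective),
    of_apply]
  field_simp

theorem psiProd_mul_det_vandermonde : ∀ (l : List ℕ) (x : Fin l.length → ℚ),
    Function.Injective x →
      psiProd l x * (vandermonde x).det = (of fun a b => x a ^ l.get b).det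
  | [], x, _ => by simp [psiProd]
  | i :: tl, x, hx =>
      shuffleMul_psi_mul_det_vandermonde (i :: tl).get (psiProd tl)
        (psiProd_mul_det_vandermonde tl) x hx

theorem stmt2_general {n : ℕ} (e : Fin n → ℕ)
    (x : Fin n → ℚ) (hx : Function.Injective x) :
    psiProd (List.ofFn e) (fun i => x (finCongr (List.length_ofFn : (List.ofFn e).length = n) i)) *
        ∏ p ∈ Finset.univ.filter (fun p : Fin n × Fin n => p.1 < p.2), (x p.2 - x p.1) =
      (Matrix.of fun a b : Fin n => x a ^ e b).det := by
  set c := finCongr (List.length_ofFn : (List.ofFn e).length = n)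
  have hV : (vandermonde x).submatrix c c = vandermonde (x ∘ c) := rfl
  have hE : (Matrix.of fun a b => x a ^ e b).submatrix c c =
      Matrix.of fun a b => (x ∘ c) a ^ (List.ofFn e).get b := by
    ext; simp [c]; rfl
  rw [prod_filter_lt_sub_eq_det_vandermonde, ← det_submatrix_equiv_self c (vandermonde x),
    ← det_submatrix_equiv_self c (Matrix.of fun a b => x a ^ e b), hV, hE]
  exact psiProd_mul_det_vandermonde _ _ (hx.comp c.injective)

/-- `ψ_{2i_1+1}·…·ψ_{2i_n+1} = s_λ` in bialternant (denominator-free) form: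
the product of generators with strictly increasing exponents `e 0 < e 1 < … < e (n-1)`,
multiplied by the Vandermonde `∏_{a<b}(x_b - x_a)`, equals `det (x_a^{e b})`. -/
theorem stmt2 {n : ℕ} (e : Fin n → ℕ) (he : StrictMono e)
    (x : Fin n → ℚ) (hx : Function.Injective x) :
    psiProd (List.ofFn e) (fun i => x (finCongr (List.length_ofFn : (List.ofFn e).length = n) i)) *
        ∏ p ∈ Finset.univ.filter (fun p : Fin n × Fin n => p.1 < p.2), (x p.2 - x p.1) =
      (Matrix.of fun a b : Fin n => x a ^ e b).det :=
  stmt2_general e x hx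

end

end Stmt2
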